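/- arXiv:2001.01539 — 4 statements merged into one kernel-verified Lean document; each statement's English description precedes it below -/
import Mathlib

section
/- If G is a group normally generated by k elements x_1,...,x_k, then the reduced group RG (the quotient of G by the normal subgroup generated by the commutators [x_i, g x_i g⁻¹] for all i and g ∈ G) is nilpotent of class at most k. -/
/-!
Induct on `k`. If every `xᵢ` commutes with all its conjugates, the normal closure `Nᵢ` of `xᵢ` is
abelian. Modulo `Nᵢ` the group is normally generated by the remaining `k - 1` images, so by
induction `γₖ(G) ≤ Nᵢ`, hence each `xᵢ ∈ Nᵢ` centralizes `γₖ(G)`. The centralizer of the normal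
subgroup `γₖ(G)` is normal and contains all `xᵢ`, so it is `G`: `γₖ(G)` is central and
`γₖ₊₁(G) = 1`. Passing to `RG` makes the hypothesis on the generators hold.
-/

open scoped commutatorElement

namespace Subgroup

variable {G H : Type*} [Group G] [Group H]

theorem commute_conj_conj {a : G} (ha : ∀ g : G, Commute a (g * a * g⁻¹)) (c d : G) :
    Commute (c * a * c⁻¹) (d * a * d⁻¹) := by
  simpa [MulAut.conj_apply, mul_assoc] using (ha (c⁻¹ * d)).map (MulAut.conj c)

theorem normalClosure_singleton_le_centralizer {a : G}
    (ha : ∀ g : G, Commute a (g * a * g⁻¹)) :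
    normalClosure {a} ≤ centralizer (normalClosure ({a} : Set G)) := by
  rw [normalClosure, centralizer_closure, closure_le]
  rintro u hu
  rw [SetLike.mem_coe, mem_centralizer_iff]
  rintro v hv
  obtain ⟨c, rfl⟩ := isConj_iff.mp (by simpa [Group.mem_conjugatesOfSet_iff] using hu)
  obtain ⟨d, rfl⟩ := isConj_iff.mp (by simpa [Group.mem_conjugatesOfSet_iff] using hv)
  exact (commute_conj_conj ha c d).symm.eq

theorem normalClosure_range_comp_eq_top {ι : Type*} {x : ι → G}
    (hgen : normalClosure (Set.range x) = ⊤) {f : G →* H} (hf : Function.Surjective f) :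
    normalClosure (Set.range (f ∘ x)) = ⊤ := by
  rw [Set.range_comp, ← map_normalClosure _ _ hf, hgen, map_top_of_surjective f hf]

theorem normalClosure_range_comp_succAbove_eq_top {k : ℕ} {x : Fin (k + 1) → G}
    (hgen : normalClosure (Set.range x) = ⊤) {f : G →* H} (hf : Function.Surjective f)
    {i : Fin (k + 1)} (hxi : f (x i) = 1) :
    normalClosure (Set.range (f ∘ x ∘ i.succAbove)) = ⊤ := by
  rw [eq_top_iff, ← normalClosure_range_comp_eq_top hgen hf]
  refine normalClosure_le_normal ?_
  rintro _ ⟨j, rfl⟩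
  rcases eq_or_ne j i with rfl | hj
  · simp [hxi]
  · obtain ⟨j, rfl⟩ := Fin.exists_succAbove_eq hj
    exact subset_normalClosure ⟨j, rfl⟩

theorem le_center_of_forall_le_normalClosure_singleton {ι : Type*} {x : ι → G}
    (hgen : normalClosure (Set.range x) = ⊤) (hx : ∀ i (g : G), Commute (x i) (g * x i * g⁻¹))
    {K : Subgroup G} [K.Normal] (hK : ∀ i, K ≤ normalClosure {x i}) :
    K ≤ center G := by
  suffices centralizer (K : Set G) = ⊤ from centralizer_eq_top_iff_subset.mp this
  rw [eq_top_iff, ← hgen]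
  refine normalClosure_le_normal ?_
  rintro _ ⟨i, rfl⟩
  exact centralizer_le (hK i) <|
    normalClosure_singleton_le_centralizer (hx i) (subset_normalClosure rfl)

theorem lowerCentralSeries_eq_bot_of_commute_conj {k : ℕ} {x : Fin k → G}
    (hgen : normalClosure (Set.range x) = ⊤) (hx : ∀ i (g : G), Commute (x i) (g * x i * g⁻¹)) :
    (⊤ : Subgroup G).lowerCentralSeries k = ⊥ := by
  induction k generalizing G with
  | zero => simpa [Set.range_eq_empty] using hgen.symm
  | succ k ih =>
    refine lowerCentralSeries_succ_eq_bot ⊤ <|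
      le_center_of_forall_le_normalClosure_singleton hgen hx fun i => ?_
    let π := QuotientGroup.mk' (normalClosure {x i})
    have hπ : Function.Surjective π := QuotientGroup.mk'_surjective _
    have hxi : π (x i) = 1 := (QuotientGroup.eq_one_iff _).mpr (subset_normalClosure rfl)
    have hx' : ∀ j (g : G ⧸ normalClosure {x i}),
        Commute ((π ∘ x ∘ i.succAbove) j) (g * (π ∘ x ∘ i.succAbove) j * g⁻¹) := by
      intro j g
      obtain ⟨g, rfl⟩ := hπ g
      simpa using (hx (i.succAbove j) g).map π
    have hbot := ih (normalClosure_range_comp_succAbove_eq_top hgen hπ hxi) hx'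
    rw [← map_top_of_surjective π hπ, ← map_lowerCentralSeries, map_eq_bot_iff] at hbot
    simpa [π] using hbot

end Subgroup

/-- If `G` is normally generated by `x 1, …, x k`, then the reduced group
`RG = G / ⟪[xᵢ, g xᵢ g⁻¹]⟫` is nilpotent of class at most `k`, i.e. the
`(k+1)`-st term of its lower central series (namely `lowerCentralSeries _ k`,
since `lowerCentralSeries _ 0 = ⊤`) is trivial. -/
theorem stmt2 (k : ℕ) (G : Type*) [Group G] (x : Fin k → G)
    (hgen : Subgroup.normalClosure (Set.range x) = ⊤) :
    Subgroup.lowerCentralSeries (⊤ : Subgroup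
      (G ⧸ Subgroup.normalClosure
        {w : G | ∃ (i : Fin k) (g : G), w = ⁅x i, g * x i * g⁻¹⁆})) k = ⊥ := by
  set R := Subgroup.normalClosure {w : G | ∃ (i : Fin k) (g : G), w = ⁅x i, g * x i * g⁻¹⁆}
  have hπ : Function.Surjective (QuotientGroup.mk' R) := QuotientGroup.mk'_surjective R
  refine Subgroup.lowerCentralSeries_eq_bot_of_commute_conj
    (Subgroup.normalClosure_range_comp_eq_top hgen hπ) fun i g => ?_
  obtain ⟨g, rfl⟩ := hπ g
  have hrel : QuotientGroup.mk' R ⁅x i, g * x i * g⁻¹⁆ = 1 :=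
    (QuotientGroup.eq_one_iff _).mpr (Subgroup.subset_normalClosure ⟨i, g, rfl⟩)
  rw [← commutatorElement_eq_one_iff_commute]
  simpa only [map_commutatorElement, map_mul, map_inv, Function.comp_apply] using hrel
end

section
/- Let G be the reduced free group RF_n. Every conjugating endomorphism of G is an automorphism; that is, End_C(RF_n) = Aut_C(RF_n), where a conjugating endomorphism is an endomorphism sending each generator x_i to a conjugate of x_i. -/
open scoped commutatorElement

/-- The defining relators of the reduced free group: commutators of a generator
with any conjugate of itself. -/
def RFrel (n : ℕ) : Set (FreeGroup (Fin n)) :=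
  {w | ∃ (i : Fin n) (g : FreeGroup (Fin n)),
    w = ⁅FreeGroup.of i, g * FreeGroup.of i * g⁻¹⁆}

/-- The reduced free group on `n` generators. -/
def RF (n : ℕ) : Type := FreeGroup (Fin n) ⧸ Subgroup.normalClosure (RFrel n)

instance (n : ℕ) : Group (RF n) := QuotientGroup.Quotient.group _

/-- The image of the `i`-th generator in the reduced free group. -/
def x {n : ℕ} (i : Fin n) : RF n := QuotientGroup.mk (FreeGroup.of i)

/-! The relations say that the normal closure of each generator `x i` centralizes `x i`. In a
group generated by `k + 1` such elements, killing one of them and inducting on `k` shows that the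
`k`-th term `γ k` of the lower central series lies in the normal closure of each generator, hence
in the centre; so `RF n` is nilpotent of class at most `n`.

A conjugating endomorphism induces the identity on the abelianization, and in a nilpotent group
this forces bijectivity: surjectivity because a subgroup that generates modulo the commutator
subgroup is the whole group; injectivity because, by the three subgroups lemma
`⁅γ k, γ 1⁆ ≤ γ (k + 2)`, the endomorphism then acts trivially on every `γ k / γ (k + 1)`, so its
kernel lies in every `γ k`. -/

open Subgroup

section General

variable {G : Type*} [Group G]

local notation "γ" => Subgroup.lowerCentralSeries (⊤ : Subgroup G)

theorem commutatorElement_mul_mul_of_mem_center {a b u v : G} (hu : u ∈ center G)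
    (hv : Commute a v) : ⁅a * u, b * v⁆ = ⁅a, b⁆ := by
  rw [mem_center_iff] at hu
  calc ⁅a * u, b * v⁆ = a * (u * (b * v)) * u⁻¹ * a⁻¹ * v⁻¹ * b⁻¹ := by
        simp only [commutatorElement_def, mul_inv_rev, mul_assoc]
    _ = a * b * (v * a⁻¹) * v⁻¹ * b⁻¹ := by rw [← hu]; group
    _ = ⁅a, b⁆ := by rw [← hv.inv_left.eq]; group

theorem QuotientGroup.commute_mk_of_commutatorElement_mem {N : Subgroup G} [N.Normal] {a b : G}
    (h : ⁅a, b⁆ ∈ N) : Commute (a : G ⧸ N) b := by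
  rw [← commutatorElement_eq_one_iff_commute]
  exact (map_commutatorElement (QuotientGroup.mk' N) a b).symm.trans
    ((QuotientGroup.eq_one_iff _).mpr h)

theorem Subgroup.commutator_commutator_le_sup (H K L : Subgroup G) [H.Normal] [K.Normal]
    [L.Normal] : ⁅⁅H, K⁆, L⁆ ≤ ⁅⁅K, L⁆, H⁆ ⊔ ⁅⁅L, H⁆, K⁆ := by
  set N := ⁅⁅K, L⁆, H⁆ ⊔ ⁅⁅L, H⁆, K⁆
  have map_eq_bot_iff_le (A : Subgroup G) : A.map (QuotientGroup.mk' N) = ⊥ ↔ A ≤ N := by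
    rw [map_eq_bot_iff, QuotientGroup.ker_mk']
  rw [← map_eq_bot_iff_le, map_commutator, map_commutator]
  apply commutator_commutator_eq_bot_of_rotate <;>
    rw [← map_commutator, ← map_commutator, map_eq_bot_iff_le]
  exacts [le_sup_left, le_sup_right]

theorem commutator_lowerCentralSeries_le (k : ℕ) : ⁅γ k, γ 1⁆ ≤ γ (k + 2) := by
  have h := commutator_commutator_le_sup ⊤ ⊤ (γ k)
  rwa [commutator_comm ⊤ (γ k), sup_idem, ← commutator_comm] at h

theorem mk_mem_center_of_mem_lowerCentralSeries {k : ℕ} {g : G} (hg : g ∈ γ k) :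
    (g : G ⧸ γ (k + 1)) ∈ center (G ⧸ γ (k + 1)) := by
  rw [mem_center_iff]
  intro q
  induction q using QuotientGroup.induction_on with | H h => ?_
  exact (QuotientGroup.commute_mk_of_commutatorElement_mem
    (commutator_mem_commutator hg (mem_top h))).eq.symm

theorem mk_apply_eq_mk_of_mem_lowerCentralSeries {φ : G →* G}
    (hφ : Abelianization.map φ = MonoidHom.id _) (k : ℕ) :
    ∀ g ∈ γ k, (φ g : G ⧸ γ (k + 1)) = g := by
  have h0 (g : G) : (φ g : G ⧸ γ 1) = g := by
    have := DFunLike.congr_fun hφ (Abelianization.of g)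
    rwa [Abelianization.map_of] at this
  induction k with
  | zero => exact fun g _ => h0 g
  | succ k ih =>
    let π := QuotientGroup.mk' (γ (k + 2))
    suffices γ (k + 1) ≤ (π.comp φ).eqLocus π from fun g hg => this hg
    rw [Subgroup.lowerCentralSeries_succ, commutator_le]
    intro c hc t _
    obtain ⟨u, hu, hcu⟩ : ∃ u ∈ γ (k + 1), φ c = c * u :=
      ⟨_, QuotientGroup.eq.mp (ih c hc).symm, (mul_inv_cancel_left c (φ c)).symm⟩
    obtain ⟨v, hv, htv⟩ : ∃ v ∈ γ 1, φ t = t * v :=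
      ⟨_, QuotientGroup.eq.mp (h0 t).symm, (mul_inv_cancel_left t (φ t)).symm⟩
    have hcv := commutator_lowerCentralSeries_le k (commutator_mem_commutator hc hv)
    change π (φ ⁅c, t⁆) = π ⁅c, t⁆
    rw [map_commutatorElement, hcu, htv, map_commutatorElement, map_mul, map_mul]
    exact commutatorElement_mul_mul_of_mem_center (mk_mem_center_of_mem_lowerCentralSeries hu)
      (QuotientGroup.commute_mk_of_commutatorElement_mem hcv)

theorem injective_of_abelianizationMap_eq_id [Group.IsNilpotent G] {φ : G →* G}
    (hφ : Abelianization.map φ = MonoidHom.id _) : Function.Injective φ := by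
  obtain ⟨n, hn⟩ := Subgroup.nilpotent_iff_lowerCentralSeries.mp ‹Group.IsNilpotent G›
  rw [injective_iff_map_eq_one]
  intro a ha
  have mem_all (k : ℕ) : a ∈ γ k := by
    induction k with
    | zero => exact mem_top a
    | succ k ih =>
      rw [← QuotientGroup.eq_one_iff, ← mk_apply_eq_mk_of_mem_lowerCentralSeries hφ k a ih, ha,
        QuotientGroup.mk_one]
  simpa [hn] using mem_all n

theorem Group.IsNilpotent.eq_top_of_sup_commutator_eq_top [Group.IsNilpotent G] {H : Subgroup G}
    (h : H ⊔ commutator G = ⊤) : H = ⊤ := by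
  suffices ∀ H : Subgroup G, H ⊔ commutator G = ⊤ → H = ⊤ from this H h
  refine Group.nilpotent_center_quotient_ind (P := fun G _ _ =>
    ∀ H : Subgroup G, H ⊔ commutator G = ⊤ → H = ⊤) G ?_ ?_
  · intro G _ _ H _
    exact Subsingleton.elim _ _
  · intro G _ _ ih H h
    let π := QuotientGroup.mk' (center G)
    have hπ : Function.Surjective π := QuotientGroup.mk'_surjective _
    have hmap : H.map π ⊔ commutator (G ⧸ center G) = ⊤ := by
      rw [_root_.commutator_def, ← map_top_of_surjective π hπ, ← map_commutator,
        ← Subgroup.map_sup, ← _root_.commutator_def, h]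
    have hHZ : H ⊔ center G = ⊤ := by
      simpa [comap_map_eq, π] using congrArg (comap π) (ih _ hmap)
    suffices commutator G ≤ H by rwa [sup_eq_left.mpr this] at h
    rw [_root_.commutator_def, commutator_le]
    intro g₁ _ g₂ _
    have hmem (g : G) := mem_sup_of_normal_right.mp (hHZ ▸ mem_top g)
    obtain ⟨h₁, hh₁, z₁, hz₁, rfl⟩ := hmem g₁
    obtain ⟨h₂, hh₂, z₂, hz₂, rfl⟩ := hmem g₂
    rw [commutatorElement_mul_mul_of_mem_center hz₁ (mem_center_iff.mp hz₂ h₁)]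
    exact H.mul_mem (H.mul_mem (H.mul_mem hh₁ hh₂) (H.inv_mem hh₁)) (H.inv_mem hh₂)

theorem bijective_of_abelianizationMap_eq_id [Group.IsNilpotent G] {φ : G →* G}
    (hφ : Abelianization.map φ = MonoidHom.id _) : Function.Bijective φ := by
  refine ⟨injective_of_abelianizationMap_eq_id hφ, MonoidHom.range_eq_top.mp ?_⟩
  refine Group.IsNilpotent.eq_top_of_sup_commutator_eq_top (eq_top_iff.mpr fun g _ => ?_)
  have hg : (φ g)⁻¹ * g ∈ commutator G := by
    rw [← Abelianization.ker_of, MonoidHom.mem_ker, map_mul, map_inv, ← Abelianization.map_of, hφ,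
      MonoidHom.id_apply, inv_mul_cancel]
  simpa using mul_mem_sup (φ.mem_range.mpr ⟨g, rfl⟩) hg

theorem normalClosure_singleton_le_centralizer {a : G} (ha : ∀ h : G, ⁅a, h * a * h⁻¹⁆ = 1) :
    normalClosure {a} ≤ centralizer {a} := by
  refine (closure_le _).mpr ?_
  intro y hy
  obtain ⟨_, rfl, hay⟩ := Group.mem_conjugatesOfSet_iff.mp hy
  obtain ⟨h, rfl⟩ := isConj_iff.mp hay
  rw [SetLike.mem_coe, mem_centralizer_singleton_iff]
  exact (commutatorElement_eq_one_iff_mul_comm.mp (ha h)).symm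

theorem lowerCentralSeries_eq_bot_of_closure_range_eq_top {k : ℕ} (g : Fin k → G)
    (hg : closure (Set.range g) = ⊤) (hcomm : ∀ i h, ⁅g i, h * g i * h⁻¹⁆ = 1) : γ k = ⊥ := by
  induction k generalizing G with
  | zero => simpa [Set.range_eq_empty] using hg.symm
  | succ k ih =>
    have le_normalClosure (i : Fin (k + 1)) :
        (⊤ : Subgroup G).lowerCentralSeries k ≤ normalClosure {g i} := by
      let π := QuotientGroup.mk' (normalClosure {g i})
      have hπ : Function.Surjective π := QuotientGroup.mk'_surjective _
      have hgen : closure (Set.range fun j => π (g (i.succAbove j))) = ⊤ := by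
        rw [eq_top_iff, ← map_top_of_surjective π hπ, ← hg, MonoidHom.map_closure, closure_le]
        rintro _ ⟨_, ⟨j, rfl⟩, rfl⟩
        rcases eq_or_ne j i with rfl | hj
        · rw [show π (g j) = 1 from (QuotientGroup.eq_one_iff _).mpr (subset_normalClosure rfl)]
          exact one_mem _
        · obtain ⟨j', rfl⟩ := Fin.exists_succAbove_eq hj
          exact subset_closure ⟨j', rfl⟩
      have hcomm' (j : Fin k) (q : G ⧸ normalClosure {g i}) :
          ⁅π (g (i.succAbove j)), q * π (g (i.succAbove j)) * q⁻¹⁆ = 1 := by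
        obtain ⟨h, rfl⟩ := hπ q
        rw [← map_inv, ← map_mul, ← map_mul, ← map_commutatorElement, hcomm, map_one]
      rw [← QuotientGroup.ker_mk' (normalClosure {g i}), ← Subgroup.map_eq_bot_iff,
        map_lowerCentralSeries, map_top_of_surjective π hπ]
      exact ih _ hgen hcomm'
    apply Subgroup.lowerCentralSeries_succ_eq_bot
    have hcenter : centralizer (Set.range g) = center G := by
      rw [← centralizer_closure, hg, coe_top, centralizer_univ]
    rw [← hcenter]
    intro c hc
    rw [mem_centralizer_iff]
    rintro _ ⟨i, rfl⟩
    exact (mem_centralizer_singleton_iff.mp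
      (normalClosure_singleton_le_centralizer (hcomm i) (le_normalClosure i hc))).symm

end General

namespace RF

theorem closure_range_x (n : ℕ) : closure (Set.range (x (n := n))) = ⊤ := by
  let π : FreeGroup (Fin n) →* RF n := QuotientGroup.mk' _
  have hx : Set.range (x (n := n)) = π '' Set.range FreeGroup.of := by
    rw [← Set.range_comp]; rfl
  rw [hx, ← MonoidHom.map_closure, FreeGroup.closure_range_of,
    map_top_of_surjective π (QuotientGroup.mk'_surjective _)]

theorem commutatorElement_x_conj_eq_one {n : ℕ} (i : Fin n) (g : RF n) :
    ⁅x i, g * x i * g⁻¹⁆ = 1 := by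
  induction g using QuotientGroup.induction_on with | H g => ?_
  exact (QuotientGroup.eq_one_iff _).mpr (subset_normalClosure ⟨i, g, rfl⟩)

theorem lowerCentralSeries_eq_bot (n : ℕ) : (⊤ : Subgroup (RF n)).lowerCentralSeries n = ⊥ :=
  lowerCentralSeries_eq_bot_of_closure_range_eq_top x (closure_range_x n)
    commutatorElement_x_conj_eq_one

instance isNilpotent (n : ℕ) : Group.IsNilpotent (RF n) :=
  Subgroup.nilpotent_iff_lowerCentralSeries.mpr ⟨n, lowerCentralSeries_eq_bot n⟩

theorem abelianizationMap_eq_id_of_conj {n : ℕ} {φ : RF n →* RF n}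
    (hconj : ∀ i : Fin n, ∃ w : RF n, φ (x i) = w⁻¹ * x i * w) :
    Abelianization.map φ = MonoidHom.id _ := by
  refine Abelianization.hom_ext _ _ (MonoidHom.eq_of_eqOn_dense (closure_range_x n) ?_)
  rintro _ ⟨i, rfl⟩
  obtain ⟨w, hw⟩ := hconj i
  simp [Abelianization.map_of, hw, mul_comm]

end RF

/-- Every conjugating endomorphism of the reduced free group is an automorphism:
`End_C(RF_n) = Aut_C(RF_n)`. -/
theorem stmt3 (n : ℕ) (φ : RF n →* RF n)
    (hconj : ∀ i : Fin n, ∃ w : RF n, φ (x i) = w⁻¹ * x i * w) :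
    Function.Bijective φ :=
  bijective_of_abelianizationMap_eq_id (RF.abelianizationMap_eq_id_of_conj hconj)
end

section
/- For any element z ∈ Z_2^{n−1}, the Gauss diagram G_z consisting of one positive arrow from strand i to strand n for each i with z_i = 1 (and no other arrows) satisfies (vlk_{i*}^{mod} + vlk_{*i}^{mod})(G_z) = z_i for all 1 ≤ i ≤ n−1. Consequently the map (vlk_{i*}^{mod} + vlk_{*i}^{mod})_{1 ≤ i ≤ n−1} from Gauss diagrams to Z_2^{n−1} is surjective. -/
/-- Gauss diagram data on `n` strands: a multiset of signed arrows
`(tail strand, head strand, sign)`, with sign `true` for `+1` and `false`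
for `-1`.  Stacking of diagrams corresponds to multiset union. -/
abbrev GD (n : ℕ) := Multiset (Fin n × Fin n × Bool)

/-- The integer sign of an arrow. -/
def sgn (b : Bool) : ℤ := if b then 1 else -1

/-- The virtual linking number `vlk i j`: the signed count of arrows with
tail on strand `i` and head on strand `j`. -/
def vlk {n : ℕ} (i j : Fin n) (D : GD n) : ℤ :=
  (D.map fun a => if a.1 = i ∧ a.2.1 = j then sgn a.2.2 else 0).sum

/-- The mod-2 total linking invariant `vlk_{i*} + vlk_{*i} (mod 2)` of
strand `i`. -/
def totMod2 {n : ℕ} (i : Fin n) (D : GD n) : ZMod 2 :=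
  (((Finset.univ.erase i).sum fun j => vlk i j D) +
    ((Finset.univ.erase i).sum fun j => vlk j i D) : ℤ)

/-- The Gauss diagram `G_z` on `n+1` strands: one positive arrow from strand
`i` to the last strand for each `i` with `z i = 1`. -/
def Gz {n : ℕ} (z : Fin n → ZMod 2) : GD (n + 1) :=
  ((Finset.univ.filter fun i : Fin n => z i = 1).val).map
    fun i => (i.castSucc, Fin.last n, true)

lemma ZMod.intCast_ite_eq_one (a : ZMod 2) :
    ((if a = 1 then 1 else 0 : ℤ) : ZMod 2) = a := by
  fin_cases a <;> rfl

lemma vlk_Gz {n : ℕ} (z : Fin n → ZMod 2) (i j : Fin (n + 1)) :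
    vlk i j (Gz z) =
      ∑ k ∈ Finset.univ.filter (fun k => z k = 1),
        if k.castSucc = i ∧ Fin.last n = j then 1 else 0 := by
  simp only [vlk, Gz, Multiset.map_map, Function.comp_def, sgn, if_true,
    Finset.sum_eq_multiset_sum]

lemma vlk_castSucc_Gz {n : ℕ} (z : Fin n → ZMod 2) (i : Fin n) (j : Fin (n + 1)) :
    vlk i.castSucc j (Gz z) = if j = Fin.last n ∧ z i = 1 then 1 else 0 := by
  by_cases hj : j = Fin.last n
  · simp [vlk_Gz, hj, Finset.sum_ite_eq']
  · simp [vlk_Gz, hj, Ne.symm hj]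

lemma vlk_Gz_castSucc {n : ℕ} (z : Fin n → ZMod 2) (i : Fin n) (j : Fin (n + 1)) :
    vlk j i.castSucc (Gz z) = 0 := by
  simp [vlk_Gz, (Fin.castSucc_lt_last i).ne']

theorem totMod2_Gz {n : ℕ} (z : Fin n → ZMod 2) (i : Fin n) :
    totMod2 i.castSucc (Gz z) = z i := by
  have hlast : Fin.last n ∈ Finset.univ.erase i.castSucc := by
    simp [(Fin.castSucc_lt_last i).ne']
  have hout : ∑ j ∈ Finset.univ.erase i.castSucc, vlk i.castSucc j (Gz z) =
      if z i = 1 then 1 else 0 := by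
    rw [Finset.sum_eq_single_of_mem _ hlast fun j _ hj => by simp [vlk_castSucc_Gz, hj]]
    simp [vlk_castSucc_Gz]
  simp only [totMod2, hout, vlk_Gz_castSucc, Finset.sum_const_zero, add_zero,
    ZMod.intCast_ite_eq_one]

/-- `G_z` realizes the prescribed value `z`, and consequently the invariant
`(vlk_{i*}^{mod} + vlk_{*i}^{mod})_{1 ≤ i ≤ n}` is surjective onto
`(ZMod 2)^n`. -/
theorem stmt11 (n : ℕ) :
    (∀ (z : Fin n → ZMod 2) (i : Fin n), totMod2 i.castSucc (Gz z) = z i) ∧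
    Function.Surjective
      (fun (D : GD (n + 1)) (i : Fin n) => totMod2 i.castSucc D) :=
  ⟨totMod2_Gz, fun z => ⟨Gz z, funext (totMod2_Gz z)⟩⟩
end

section
/- Let φ ∈ Aut_C(RF_n) be a conjugating automorphism of the reduced free group, and for each j let λ_j ∈ RF_{n−1}^{(j)} be the unique element with φ(x_j) = λ_j⁻¹ x_j λ_j. Define LK_{ij}(φ) := x_i^*(λ_j), where x_i^*: RF_n → Z is the homomorphism with x_i^*(x_i) = 1 and x_i^*(x_k) = 0 for k ≠ i. Then for φ, ψ ∈ Aut_C(RF_n), LK_{ij}(ψ ∘ φ) = LK_{ij}(φ) + LK_{ij}(ψ); i.e., LK_{ij} is a monoid homomorphism from (Aut_C(RF_n), ∘) to (Z, +). -/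
open scoped commutatorElement

/-!
Fix `i ≠ j` and map `RF n` to the integral Heisenberg group, sending `x i` to `X = (1,0,0)`,
`x j` to `Y = (0,1,0)` and the other generators to `1`; this is possible because in a
nilpotent group of class two every conjugate of `u` commutes with `u`. The first two
coordinates of the image of `w` are `x_i^*(w)` and `x_j^*(w)`, and when `x_j^*(λ) = 0` the
central coordinate of the image of `λ⁻¹ x_j λ` is `-x_i^*(λ)`. So `x_i^*(λ_j)` is read off from
`φ(x_j)` alone. Since `(ψ ∘ φ)(x_j) = (λ'_j ψ(λ_j))⁻¹ x_j (λ'_j ψ(λ_j))` and the conjugating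
automorphism `ψ` acts trivially on the abelianization, the exponents add.
-/

namespace RF

variable {n : ℕ}

lemma hom_ext {M : Type*} [Monoid M] {f g : RF n →* M} (h : ∀ k, f (x k) = g (x k)) :
    f = g :=
  QuotientGroup.monoidHom_ext (Subgroup.normalClosure (RFrel n)) (FreeGroup.ext_hom _ _ h)

def lift {G : Type*} [Group G] (f : Fin n → G) (hf : ∀ k g, ⁅f k, g * f k * g⁻¹⁆ = 1) :
    RF n →* G :=
  QuotientGroup.lift _ (FreeGroup.lift f) <| Subgroup.normalClosure_le_normal <| by
    rintro _ ⟨k, g, rfl⟩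
    simp [map_commutatorElement, hf]

@[simp] lemma lift_x {G : Type*} [Group G] (f : Fin n → G)
    (hf : ∀ k g, ⁅f k, g * f k * g⁻¹⁆ = 1) (k : Fin n) : lift f hf (x k) = f k :=
  FreeGroup.lift_apply_of

lemma comp_eq_self_of_map_x_conj {A : Type*} [CommGroup A] {ψ : RF n →* RF n}
    (hψ : ∀ k, ∃ w, ψ (x k) = w⁻¹ * x k * w) (f : RF n →* A) : f.comp ψ = f :=
  hom_ext fun k => by
    obtain ⟨w, hw⟩ := hψ k
    simp [hw, mul_comm]

end RF

/-- `⟨a, b, c⟩` stands for the unitriangular matrix `[[1, a, c], [0, 1, b], [0, 0, 1]]`. -/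
@[ext] structure Heisenberg where
  a : ℤ
  b : ℤ
  c : ℤ

namespace Heisenberg

instance : Mul Heisenberg := ⟨fun u v => ⟨u.a + v.a, u.b + v.b, u.c + v.c + u.a * v.b⟩⟩
instance : One Heisenberg := ⟨⟨0, 0, 0⟩⟩
instance : Inv Heisenberg := ⟨fun u => ⟨-u.a, -u.b, -u.c + u.a * u.b⟩⟩

@[simp] lemma mul_a (u v : Heisenberg) : (u * v).a = u.a + v.a := rfl
@[simp] lemma mul_b (u v : Heisenberg) : (u * v).b = u.b + v.b := rfl
@[simp] lemma mul_c (u v : Heisenberg) : (u * v).c = u.c + v.c + u.a * v.b := rfl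
@[simp] lemma one_a : (1 : Heisenberg).a = 0 := rfl
@[simp] lemma one_b : (1 : Heisenberg).b = 0 := rfl
@[simp] lemma one_c : (1 : Heisenberg).c = 0 := rfl
@[simp] lemma inv_a (u : Heisenberg) : u⁻¹.a = -u.a := rfl
@[simp] lemma inv_b (u : Heisenberg) : u⁻¹.b = -u.b := rfl
@[simp] lemma inv_c (u : Heisenberg) : u⁻¹.c = -u.c + u.a * u.b := rfl

instance : Group Heisenberg where
  mul_assoc u v w := by ext <;> simp <;> ring
  one_mul u := by ext <;> simp
  mul_one u := by ext <;> simp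
  inv_mul_cancel u := by ext <;> simp

lemma commutatorElement_eq_one_of_a_eq_of_b_eq {u v : Heisenberg} (ha : u.a = v.a)
    (hb : u.b = v.b) : ⁅u, v⁆ = 1 := by
  ext <;> simp [commutatorElement_def, ha, hb]
  ring

lemma commutatorElement_conj_eq_one (u g : Heisenberg) : ⁅u, g * u * g⁻¹⁆ = 1 :=
  commutatorElement_eq_one_of_a_eq_of_b_eq (by simp) (by simp)

def X : Heisenberg := ⟨1, 0, 0⟩
def Y : Heisenberg := ⟨0, 1, 0⟩

def projA : Heisenberg →* Multiplicative ℤ where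
  toFun u := Multiplicative.ofAdd u.a
  map_one' := rfl
  map_mul' _ _ := rfl

def projB : Heisenberg →* Multiplicative ℤ where
  toFun u := Multiplicative.ofAdd u.b
  map_one' := rfl
  map_mul' _ _ := rfl

lemma inv_mul_Y_mul {g : Heisenberg} (hb : g.b = 0) : g⁻¹ * Y * g = ⟨0, 1, -g.a⟩ := by
  ext <;> simp [Y, hb]

lemma a_eq_of_inv_mul_Y_mul_eq {g h : Heisenberg} (hg : g.b = 0) (hh : h.b = 0)
    (e : g⁻¹ * Y * g = h⁻¹ * Y * h) : g.a = h.a := by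
  have := congrArg c e
  rw [inv_mul_Y_mul hg, inv_mul_Y_mul hh] at this
  simpa using this

end Heisenberg

open Heisenberg in
def heisenbergHom {n : ℕ} (i j : Fin n) : RF n →* Heisenberg :=
  RF.lift (fun k => if k = i then X else if k = j then Y else 1)
    fun _ _ => commutatorElement_conj_eq_one _ _

section Exponents

variable {n : ℕ} (xstar : Fin n → (RF n →* Multiplicative ℤ))
  (hx1 : ∀ i : Fin n, xstar i (x i) = Multiplicative.ofAdd 1)
  (hx0 : ∀ i k : Fin n, k ≠ i → xstar i (x k) = 1)
include hx1 hx0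

lemma projA_comp_heisenbergHom (i j : Fin n) :
    Heisenberg.projA.comp (heisenbergHom i j) = xstar i :=
  RF.hom_ext fun k => by
    by_cases hki : k = i
    · subst hki; simp [heisenbergHom, hx1, Heisenberg.projA, Heisenberg.X]
    by_cases hkj : k = j
    · subst hkj; simp [heisenbergHom, hki, hx0 i k hki, Heisenberg.projA, Heisenberg.Y]
    · simp [heisenbergHom, hki, hkj, hx0 i k hki, Heisenberg.projA]

lemma projB_comp_heisenbergHom {i j : Fin n} (hij : i ≠ j) :
    Heisenberg.projB.comp (heisenbergHom i j) = xstar j :=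
  RF.hom_ext fun k => by
    by_cases hki : k = i
    · subst hki; simp [heisenbergHom, hx0 j k hij, Heisenberg.projB, Heisenberg.X]
    by_cases hkj : k = j
    · subst hkj; simp [heisenbergHom, hki, hx1, Heisenberg.projB, Heisenberg.Y]
    · simp [heisenbergHom, hki, hkj, hx0 j k hkj, Heisenberg.projB]

lemma xstar_eq_of_inv_mul_x_mul_eq {i j : Fin n} (hij : i ≠ j) {l m : RF n}
    (hl : xstar j l = 1) (hm : xstar j m = 1) (e : l⁻¹ * x j * l = m⁻¹ * x j * m) :
    xstar i l = xstar i m := by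
  set F := heisenbergHom i j
  have hb : ∀ w, xstar j w = 1 → (F w).b = 0 := fun w hw => congrArg Multiplicative.toAdd
    ((DFunLike.congr_fun (projB_comp_heisenbergHom xstar hx1 hx0 hij) w).trans hw)
  have hY : F (x j) = Heisenberg.Y := by simp [F, heisenbergHom, hij.symm]
  have ha := Heisenberg.a_eq_of_inv_mul_Y_mul_eq (hb l hl) (hb m hm)
    (by simpa [hY] using congrArg F e)
  rw [← projA_comp_heisenbergHom xstar hx1 hx0 i j]
  exact congrArg Multiplicative.ofAdd ha

omit hx1 in
lemma xstar_eq_one_of_mem_closure {j : Fin n} {w : RF n}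
    (hw : w ∈ Subgroup.closure {g : RF n | ∃ k : Fin n, k ≠ j ∧ g = x k}) :
    xstar j w = 1 :=
  (Subgroup.closure_le (xstar j).ker).2 (by rintro _ ⟨k, hk, rfl⟩; exact hx0 j k hk) hw

end Exponents

theorem stmt13_general (n : ℕ)
    (xstar : Fin n → (RF n →* Multiplicative ℤ))
    (hx1 : ∀ i : Fin n, xstar i (x i) = Multiplicative.ofAdd 1)
    (hx0 : ∀ i k : Fin n, k ≠ i → xstar i (x k) = 1)
    (φ ψ : RF n ≃* RF n)
    (lφ lψ lc : Fin n → RF n)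
    (hlφ : ∀ j : Fin n,
      lφ j ∈ Subgroup.closure {g : RF n | ∃ k : Fin n, k ≠ j ∧ g = x k} ∧
      φ (x j) = (lφ j)⁻¹ * x j * lφ j)
    (hlψ : ∀ j : Fin n,
      lψ j ∈ Subgroup.closure {g : RF n | ∃ k : Fin n, k ≠ j ∧ g = x k} ∧
      ψ (x j) = (lψ j)⁻¹ * x j * lψ j)
    (hlc : ∀ j : Fin n,
      lc j ∈ Subgroup.closure {g : RF n | ∃ k : Fin n, k ≠ j ∧ g = x k} ∧
      ψ (φ (x j)) = (lc j)⁻¹ * x j * lc j) :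
    ∀ i j : Fin n, i ≠ j →
      Multiplicative.toAdd (xstar i (lc j)) =
        Multiplicative.toAdd (xstar i (lφ j)) +
          Multiplicative.toAdd (xstar i (lψ j)) := by
  intro i j hij
  have hψ (m : Fin n) (w : RF n) : xstar m (ψ w) = xstar m w :=
    DFunLike.congr_fun (RF.comp_eq_self_of_map_x_conj (ψ := ψ.toMonoidHom)
      (fun k => ⟨_, (hlψ k).2⟩) (xstar m)) w
  have hmem {w : RF n} := xstar_eq_one_of_mem_closure xstar hx0 (j := j) (w := w)
  have hcomp : ψ (φ (x j)) = (lψ j * ψ (lφ j))⁻¹ * x j * (lψ j * ψ (lφ j)) := by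
    rw [(hlφ j).2, map_mul, map_mul, map_inv, (hlψ j).2]
    group
  have key := xstar_eq_of_inv_mul_x_mul_eq xstar hx1 hx0 hij (hmem (hlc j).1)
    (by rw [map_mul, hψ, hmem (hlψ j).1, hmem (hlφ j).1, mul_one])
    ((hlc j).2.symm.trans hcomp)
  rw [key, map_mul, hψ, toAdd_mul, add_comm]

/-- `LK_{ij}` is additive under composition of conjugating automorphisms:
if `φ(x j) = λ_j⁻¹ x_j λ_j`, `ψ(x j) = μ_j⁻¹ x_j μ_j` and
`(ψ ∘ φ)(x j) = ν_j⁻¹ x_j ν_j` with conjugators in the subgroup generated by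
the generators other than `x j`, then for `i ≠ j` the `x i`-exponent of `ν_j`
is the sum of those of `λ_j` and `μ_j`; i.e. `LK_{ij}` is a monoid
homomorphism `Aut_C(RF_n) → ℤ`. -/
theorem stmt13 (n : ℕ)
    (xstar : Fin n → (RF n →* Multiplicative ℤ))
    (hx1 : ∀ i : Fin n, xstar i (x i) = Multiplicative.ofAdd 1)
    (hx0 : ∀ i k : Fin n, k ≠ i → xstar i (x k) = 1)
    (φ ψ : RF n ≃* RF n)
    (hφconj : ∀ i : Fin n, ∃ w : RF n, φ (x i) = w⁻¹ * x i * w)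
    (hψconj : ∀ i : Fin n, ∃ w : RF n, ψ (x i) = w⁻¹ * x i * w)
    (lφ lψ lc : Fin n → RF n)
    (hlφ : ∀ j : Fin n,
      lφ j ∈ Subgroup.closure {g : RF n | ∃ k : Fin n, k ≠ j ∧ g = x k} ∧
      φ (x j) = (lφ j)⁻¹ * x j * lφ j)
    (hlψ : ∀ j : Fin n,
      lψ j ∈ Subgroup.closure {g : RF n | ∃ k : Fin n, k ≠ j ∧ g = x k} ∧
      ψ (x j) = (lψ j)⁻¹ * x j * lψ j)
    (hlc : ∀ j : Fin n,
      lc j ∈ Subgroup.closure {g : RF n | ∃ k : Fin n, k ≠ j ∧ g = x k} ∧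
      ψ (φ (x j)) = (lc j)⁻¹ * x j * lc j) :
    ∀ i j : Fin n, i ≠ j →
      Multiplicative.toAdd (xstar i (lc j)) =
        Multiplicative.toAdd (xstar i (lφ j)) +
          Multiplicative.toAdd (xstar i (lψ j)) :=
  stmt13_general n xstar hx1 hx0 φ ψ lφ lψ lc hlφ hlψ hlc
end
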